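/- Given data points (x_i, y_i), i = 1,…,n, let C be the 4×4 Taubin matrix with first row (4M_z, 2M_x, 2M_y, 0), second row (2M_x, n, 0, 0), third row (2M_y, 0, n, 0), fourth row (0,0,0,0), where M_z = Σ_i (x_i²+y_i²), M_x = Σ_i x_i, M_y = Σ_i y_i. Then for every vector v = (A,B,C',D) ∈ ℝ⁴ one has vᵀCv = Σ_{i=1}^n ((2Ax_i + B)² + (2Ay_i + C')²) ≥ 0, so C is symmetric positive semidefinite; and if moreover M = Σ_i v_i v_iᵀ (with v_i = (x_i²+y_i², x_i, y_i, 1)ᵀ) is positive definite, then every complex root of the polynomial η ↦ det(M − ηC) is a positive real number. -/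

import Mathlib

open Matrix

/-- The 4×4 moment matrix `M = ∑ᵢ vᵢ vᵢᵀ` with `vᵢ = (zᵢ, xᵢ, yᵢ, 1)ᵀ`,
`zᵢ = xᵢ² + yᵢ²`. -/
noncomputable def momentM (n : ℕ) (x y : Fin n → ℝ) : Matrix (Fin 4) (Fin 4) ℝ :=
  ∑ i, Matrix.vecMulVec ![x i ^ 2 + y i ^ 2, x i, y i, 1]
    ![x i ^ 2 + y i ^ 2, x i, y i, 1]

/-- The 4×4 Taubin constraint matrix, built from the moments
`M_z = ∑ (xᵢ² + yᵢ²)`, `M_x = ∑ xᵢ`, `M_y = ∑ yᵢ`. -/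
noncomputable def taubinC (n : ℕ) (x y : Fin n → ℝ) : Matrix (Fin 4) (Fin 4) ℝ :=
  !![4 * ∑ i, (x i ^ 2 + y i ^ 2), 2 * ∑ i, x i, 2 * ∑ i, y i, 0;
     2 * ∑ i, x i, (n : ℝ), 0, 0;
     2 * ∑ i, y i, 0, (n : ℝ), 0;
     0, 0, 0, 0]

/-!
If `det (M - η C) = 0`, pick `v ≠ 0` with `M v = η C v`; then `v* M v = η (v* C v)`. For a real
symmetric matrix the Hermitian form on `v = p + i q` is the sum of the real forms on `p` and `q`, so
positive definiteness of `M` and semidefiniteness of `C` pass to their complexifications: `v* M v > 0`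
and `v* C v ≥ 0`. Hence `v* C v > 0` and `η` is the quotient of two positive reals. That `C ≥ 0`
is the identity `vᵀ C v = ∑ᵢ ‖∇P(xᵢ, yᵢ)‖²`.
-/

open scoped ComplexOrder

namespace Matrix

variable {ι : Type*} [Fintype ι]

theorem star_dotProduct_map_ofReal_mulVec {M : Matrix ι ι ℝ} (hM : M.IsSymm) (v : ι → ℂ) :
    star v ⬝ᵥ (M.map Complex.ofReal *ᵥ v) =
      ((fun i ↦ (v i).re) ⬝ᵥ M *ᵥ (fun i ↦ (v i).re) +
        (fun i ↦ (v i).im) ⬝ᵥ M *ᵥ (fun i ↦ (v i).im) : ℝ) := by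
  have hswap : ∑ i, ∑ j, (v i).re * (M i j * (v j).im) =
      ∑ i, ∑ j, (v i).im * (M i j * (v j).re) := by
    rw [Finset.sum_comm]
    refine Finset.sum_congr rfl fun i _ ↦ Finset.sum_congr rfl fun j _ ↦ ?_
    rw [← hM.apply i j]
    ring
  apply Complex.ext
  · simp [dotProduct, mulVec, Complex.mul_re, Finset.mul_sum, ← Finset.sum_add_distrib]
  · simp [dotProduct, mulVec, Complex.mul_im, Finset.mul_sum, Finset.sum_add_distrib, hswap]

theorem PosSemidef.map_ofReal {M : Matrix ι ι ℝ} (hM : M.PosSemidef) :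
    (M.map Complex.ofReal).PosSemidef := by
  refine .of_dotProduct_mulVec_nonneg
    (hM.isHermitian.map _ fun r ↦ (Complex.conj_ofReal r).symm) fun v ↦ ?_
  rw [star_dotProduct_map_ofReal_mulVec (isHermitian_iff_isSymm.mp hM.isHermitian),
    Complex.zero_le_real]
  simpa using add_nonneg (hM.dotProduct_mulVec_nonneg (fun i ↦ (v i).re))
    (hM.dotProduct_mulVec_nonneg (fun i ↦ (v i).im))

theorem PosDef.map_ofReal {M : Matrix ι ι ℝ} (hM : M.PosDef) :
    (M.map Complex.ofReal).PosDef := by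
  refine .of_dotProduct_mulVec_pos
    (hM.isHermitian.map _ fun r ↦ (Complex.conj_ofReal r).symm) fun v hv ↦ ?_
  rw [star_dotProduct_map_ofReal_mulVec (isHermitian_iff_isSymm.mp hM.isHermitian),
    Complex.zero_lt_real]
  have hnonneg (x : ι → ℝ) : 0 ≤ x ⬝ᵥ M *ᵥ x := by
    simpa using hM.posSemidef.dotProduct_mulVec_nonneg x
  have hpos {x : ι → ℝ} (hx : x ≠ 0) : 0 < x ⬝ᵥ M *ᵥ x := by
    simpa using hM.dotProduct_mulVec_pos hx
  obtain hre | him : (fun i ↦ (v i).re) ≠ 0 ∨ (fun i ↦ (v i).im) ≠ 0 := by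
    by_contra! h
    exact hv (funext fun i ↦ Complex.ext (congrFun h.1 i) (congrFun h.2 i))
  · exact add_pos_of_pos_of_nonneg (hpos hre) (hnonneg _)
  · exact add_pos_of_nonneg_of_pos (hnonneg _) (hpos him)

theorem PosDef.pos_of_det_sub_smul_eq_zero {𝕜 : Type*} [RCLike 𝕜] [DecidableEq ι]
    {A B : Matrix ι ι 𝕜} (hA : A.PosDef) (hB : B.PosSemidef) {η : 𝕜}
    (hη : (A - η • B).det = 0) : 0 < η := by
  obtain ⟨v, hv, hAv⟩ := exists_mulVec_eq_zero_iff.mpr hη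
  have hquad : star v ⬝ᵥ A *ᵥ v = η * (star v ⬝ᵥ B *ᵥ v) := by
    rw [sub_mulVec, smul_mulVec, sub_eq_zero] at hAv
    rw [hAv, dotProduct_smul, smul_eq_mul]
  have hApos := hA.dotProduct_mulVec_pos hv
  have hBpos : 0 < star v ⬝ᵥ B *ᵥ v := by
    refine (hB.dotProduct_mulVec_nonneg v).lt_of_ne' fun h ↦ ?_
    rw [hquad, h, mul_zero] at hApos
    exact hApos.false
  calc 0 < (star v ⬝ᵥ A *ᵥ v) / (star v ⬝ᵥ B *ᵥ v) := div_pos hApos hBpos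
    _ = η := by rw [hquad, mul_div_cancel_right₀ _ hBpos.ne']

end Matrix

section Taubin

variable (n : ℕ) (x y : Fin n → ℝ)

theorem taubinC_isSymm : (taubinC n x y).IsSymm := by
  ext i j
  fin_cases i <;> fin_cases j <;> rfl

theorem dotProduct_taubinC_mulVec (v : Fin 4 → ℝ) :
    v ⬝ᵥ taubinC n x y *ᵥ v = ∑ i, ((2 * v 0 * x i + v 1) ^ 2 + (2 * v 0 * y i + v 2) ^ 2) := by
  have hexpand (i : Fin n) : (2 * v 0 * x i + v 1) ^ 2 + (2 * v 0 * y i + v 2) ^ 2 =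
      4 * v 0 ^ 2 * (x i ^ 2 + y i ^ 2) + 4 * v 0 * v 1 * x i + 4 * v 0 * v 2 * y i +
        (v 1 ^ 2 + v 2 ^ 2) := by
    ring
  simp only [dotProduct, mulVec, taubinC, Finset.sum_add_distrib, of_apply, cons_val',
    cons_val_fin_one, Fin.sum_univ_four, Fin.isValue, cons_val_zero, cons_val_one, cons_val,
    zero_mul, add_zero, mul_zero, hexpand, ← Finset.mul_sum, Finset.sum_const, Finset.card_univ,
    Fintype.card_fin, nsmul_eq_mul]
  ring

theorem dotProduct_taubinC_mulVec_nonneg (v : Fin 4 → ℝ) : 0 ≤ v ⬝ᵥ taubinC n x y *ᵥ v := by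
  rw [dotProduct_taubinC_mulVec]
  positivity

theorem taubinC_posSemidef : (taubinC n x y).PosSemidef :=
  .of_dotProduct_mulVec_nonneg (isHermitian_iff_isSymm.mpr (taubinC_isSymm n x y)) fun v ↦ by
    simpa using dotProduct_taubinC_mulVec_nonneg n x y v

end Taubin

/-- For every `v = (A,B,C',D)` one has
`vᵀCv = ∑ᵢ ((2Axᵢ + B)² + (2Ayᵢ + C')²) ≥ 0`, so the Taubin matrix `C` is
symmetric positive semidefinite; and if the moment matrix `M` is positive
definite, every complex root of `η ↦ det(M - ηC)` is a positive real number. -/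
theorem stmt_19 (n : ℕ) (x y : Fin n → ℝ) :
    (∀ v : Fin 4 → ℝ,
      v ⬝ᵥ (taubinC n x y).mulVec v
        = ∑ i, ((2 * v 0 * x i + v 1) ^ 2 + (2 * v 0 * y i + v 2) ^ 2)) ∧
    (∀ v : Fin 4 → ℝ, 0 ≤ v ⬝ᵥ (taubinC n x y).mulVec v) ∧
    (taubinC n x y).IsSymm ∧
    (taubinC n x y).PosSemidef ∧
    ((momentM n x y).PosDef →
      ∀ η : ℂ,
        ((momentM n x y).map Complex.ofReal
            - η • (taubinC n x y).map Complex.ofReal).det = 0 →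
          η.im = 0 ∧ 0 < η.re) := by
  refine ⟨dotProduct_taubinC_mulVec n x y, dotProduct_taubinC_mulVec_nonneg n x y,
    taubinC_isSymm n x y, taubinC_posSemidef n x y, fun hM η hη ↦ ?_⟩
  obtain ⟨hre, him⟩ := Complex.pos_iff.mp <|
    hM.map_ofReal.pos_of_det_sub_smul_eq_zero (taubinC_posSemidef n x y).map_ofReal hη
  exact ⟨him.symm, hre⟩
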